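/- If P is an invertible module over a commutative ring k (i.e., P ⊗ P* ≅ k canonically) and A is a P-Frobenius k-algebra, then A is quasi-Frobenius in Müller's sense: A is finitely generated projective over k and A as a right A-module is a direct summand of a finite direct sum of copies of the k-dual A* as a right A-module. -/

import Mathlib

/-- `P` is an invertible `k`-module: finitely generated projective with the canonical
evaluation `P ⊗ P* → k` bijective (equivalently, f.g. projective of constant rank 1). -/
def IsInvertibleModule (k P : Type*) [CommRing k] [AddCommGroup P] [Module k P] : Prop :=
  Module.Finite k P ∧ Module.Projective k P ∧ Function.Bijective (contractRight k P)

/-! Applying `Hom_k(A, -)` to a retraction `f ∘ s = id` of `P` off `N` exhibits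
`A ≅ Hom_k(A, P)` as a retract of `Hom_k(A, N)`, compatibly with the right `A`-actions by
precomposition with left multiplication. For `P` finitely generated projective, `N = kⁿ`, and
`Hom_k(A, kⁿ) = (A*)ⁿ`. -/

theorem exists_retract_linearMap_of_equiv_linearMap {k A P N : Type*} [CommSemiring k]
    [Semiring A] [Algebra k A] [AddCommMonoid P] [Module k P] [AddCommMonoid N] [Module k N]
    (Φ : A ≃ₗ[k] (A →ₗ[k] P)) (hΦ : ∀ x a : A, Φ (x * a) = Φ x ∘ₗ LinearMap.mulLeft k a)
    (s : P →ₗ[k] N) (f : N →ₗ[k] P) (hfs : f ∘ₗ s = LinearMap.id) :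
    ∃ (ι : A →ₗ[k] (A →ₗ[k] N)) (π : (A →ₗ[k] N) →ₗ[k] A),
      (∀ x : A, π (ι x) = x) ∧
      (∀ x a : A, ι (x * a) = ι x ∘ₗ LinearMap.mulLeft k a) ∧
      (∀ (g : A →ₗ[k] N) (a : A), π (g ∘ₗ LinearMap.mulLeft k a) = π g * a) := by
  refine ⟨LinearMap.compRight k s ∘ₗ Φ.toLinearMap,
    Φ.symm.toLinearMap ∘ₗ LinearMap.compRight k f, fun x => ?_, fun x a => ?_, fun g a => ?_⟩
  · simp [← LinearMap.comp_assoc, hfs]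
  · simp [hΦ, LinearMap.comp_assoc]
  · apply Φ.injective
    simp [hΦ, LinearMap.comp_assoc]

theorem pFrobenius_is_QF (k A P : Type*) [CommRing k] [AddCommGroup P] [Module k P]
    [Ring A] [Algebra k A] (hP : IsInvertibleModule k P)
    (hFrob : ∃ Φ : A ≃ₗ[k] (A →ₗ[k] P), ∀ a x z : A, Φ (x * a) z = Φ x (a * z)) :
    ∃ (n : ℕ) (ι : A →ₗ[k] (Fin n → Module.Dual k A))
      (π : (Fin n → Module.Dual k A) →ₗ[k] A),
      (∀ x : A, π (ι x) = x) ∧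
      (∀ (x a : A), ι (x * a) = fun i => (ι x i).comp (LinearMap.mulLeft k a)) ∧
      (∀ (g : Fin n → Module.Dual k A) (a : A),
        π (fun i => (g i).comp (LinearMap.mulLeft k a)) = π g * a) := by
  obtain ⟨_, _, -⟩ := hP
  obtain ⟨Φ, hΦ⟩ := hFrob
  obtain ⟨n, f, s, -, -, hfs⟩ := Module.Finite.exists_comp_eq_id_of_projective k P
  obtain ⟨ι, π, hπι, hι, hπ⟩ :=
    exists_retract_linearMap_of_equiv_linearMap Φ (fun x a => LinearMap.ext (hΦ a x)) s f hfs
  let e : (Fin n → Module.Dual k A) ≃ₗ[k] (A →ₗ[k] (Fin n → k)) := LinearEquiv.linearMapPi k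
  refine ⟨n, e.symm.toLinearMap ∘ₗ ι, π ∘ₗ e.toLinearMap, fun x => ?_, fun x a => ?_,
    fun g a => ?_⟩
  · simpa using hπι x
  · simp only [LinearMap.comp_apply, LinearEquiv.coe_coe, hι]
    rfl
  · exact hπ (e g) a
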